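/- Let p be an idempotent ultrafilter on a commutative semigroup X and Y a commutative group. If f, f' are p-almost polynomials X → Y, then f + f' is a p-almost polynomial, C(f+f') = C(f) + C(f'), and deg^p(f+f') ≤ max{deg^p f, deg^p f'}. -/

import Mathlib

open Filter

namespace AP

variable {X : Type*} [AddCommSemigroup X] {Y : Type*} [AddCommGroup Y]

/-- The relativised difference operator `Δ̄ₐ f (x) = f (x + a) - f x - f a`. -/
def Dbar (a : X) (f : X → Y) : X → Y := fun x => f (x + a) - f x - f a

/-- The iterated difference `Δ̄^d f (m_0, …, m_d)`, where the first argument `w 0` is the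
parameter of the outermost difference and the last argument is the evaluation point. -/
def DeltaFull : ∀ (d : ℕ), (X → Y) → (Fin (d + 1) → X) → Y
  | 0, f, w => f (w 0)
  | d + 1, f, w => DeltaFull d (Dbar (w 0) f) fun i => w i.succ

/-- The iterated `p`-limit of a function of `r` variables, taken in the discrete topology on the
target: the limit exists with value `c` iff, iteratively, the value is `c` `p`-almost
everywhere.  The outermost limit is taken over the first variable. -/
def IterLim {Z : Type*} (p : Ultrafilter X) : ∀ (r : ℕ), ((Fin r → X) → Z) → Z → Prop
  | 0, g, c => g (fun i => i.elim0) = c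
  | r + 1, g, c => ∀ᶠ a in (p : Filter X), IterLim p r (fun v => g (Fin.cons a v)) c

/-- `HasC p d f c` asserts that the constant
`C_d(f) = (-1)^d ⋅ p-lim_{m_0,…,m_d} Δ̄^d f (m_0,…,m_d)` exists and equals `c`. -/
def HasC (p : Ultrafilter X) (d : ℕ) (f : X → Y) (c : Y) : Prop :=
  IterLim p (d + 1) (DeltaFull d f) (((-1 : ℤ) ^ d) • c)

/-- `f` is a `p`-almost polynomial of degree at most `d`: for `d = 0` this means `f` is constant
`p`-a.e. (degree `-∞` corresponding to the constant `0`), and for `d + 1` it means that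
`Δ̄ₐ f` has degree at most `d` for `p`-almost all `a`. -/
def APdegLE (p : Ultrafilter X) : ℕ → (X → Y) → Prop
  | 0, f => ∃ c, ∀ᶠ x in (p : Filter X), f x = c
  | d + 1, f => ∀ᶠ a in (p : Filter X), APdegLE p d (Dbar a f)

/-- Addition of ultrafilters: `A ∈ p + q` iff `∀ᶠ m in p, ∀ᶠ n in q, n + m ∈ A`, so that
`(p+q)-lim_n g n = p-lim_m q-lim_n g (n + m)`. -/
def UFAdd (p q : Ultrafilter X) : Ultrafilter X := p.bind fun m => q.map fun n => n + m

/-- An ultrafilter is idempotent if `p + p = p`. -/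
def IsIdem (p : Ultrafilter X) : Prop := UFAdd p p = p

end AP

namespace AP

variable {X : Type*} [AddCommSemigroup X] {Y : Type*} [AddCommGroup Y]

lemma idem_eventually (p : Ultrafilter X) (hp : IsIdem p) {S : X → Prop}
    (hS : ∀ᶠ x in (p : Filter X), S x) :
    ∀ᶠ a in (p : Filter X), ∀ᶠ x in (p : Filter X), S (x + a) := by
  have h : ∀ᶠ x in ((UFAdd p p : Ultrafilter X) : Filter X), S x := by rw [hp]; exact hS
  exact h

lemma Dbar_add (a : X) (f f' : X → Y) :
    Dbar a (fun x => f x + f' x) = fun x => Dbar a f x + Dbar a f' x := by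
  funext x; simp only [Dbar]; abel

lemma DeltaFull_add (d : ℕ) (f f' : X → Y) (w : Fin (d + 1) → X) :
    DeltaFull d (fun x => f x + f' x) w = DeltaFull d f w + DeltaFull d f' w := by
  induction d generalizing f f' with
  | zero => rfl
  | succ d ih =>
    show DeltaFull d (Dbar (w 0) fun x => f x + f' x) _ = _
    rw [Dbar_add]
    exact ih _ _ _

lemma IterLim_add (p : Ultrafilter X) (r : ℕ) (g g' : (Fin r → X) → Y) (c c' : Y)
    (h : IterLim p r g c) (h' : IterLim p r g' c') :
    IterLim p r (fun v => g v + g' v) (c + c') := by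
  induction r with
  | zero => show g _ + g' _ = _; rw [h, h']
  | succ r ih => exact (h.and h').mono fun a ⟨ha, ha'⟩ => ih _ _ ha ha'

lemma IterLim_congr (p : Ultrafilter X) (r : ℕ) {g g' : (Fin r → X) → Y} {c : Y}
    (hgg : ∀ v, g v = g' v) (h : IterLim p r g c) : IterLim p r g' c := by
  induction r with
  | zero =>
    show g' (fun i => i.elim0) = c
    exact (hgg _).symm.trans h
  | succ r ih => exact h.mono fun a ha => ih (fun v => hgg _) ha

lemma HasC_add {p : Ultrafilter X} {d : ℕ} {f f' : X → Y} {c c' : Y}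
    (h : HasC p d f c) (h' : HasC p d f' c') :
    HasC p d (fun x => f x + f' x) (c + c') := by
  unfold HasC at *
  rw [smul_add]
  exact IterLim_congr p (d + 1) (fun v => (DeltaFull_add d f f' v).symm)
    (IterLim_add p (d + 1) _ _ _ _ h h')

lemma DeltaFull_cons (d : ℕ) (f : X → Y) (a : X) (v : Fin (d + 1) → X) :
    DeltaFull (d + 1) f (Fin.cons a v) = DeltaFull d (Dbar a f) v := by
  simp only [DeltaFull, Fin.cons_zero, Fin.cons_succ]

lemma hasC_succ_iff (p : Ultrafilter X) (d : ℕ) (f : X → Y) (c : Y) :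
    HasC p (d + 1) f c ↔ ∀ᶠ a in (p : Filter X), HasC p d (Dbar a f) (-c) := by
  unfold HasC
  show (∀ᶠ a in (p : Filter X), IterLim p (d + 1)
      (fun v => DeltaFull (d + 1) f (Fin.cons a v)) (((-1 : ℤ) ^ (d + 1)) • c)) ↔ _
  refine eventually_congr (Eventually.of_forall fun a => ?_)
  have h1 : (((-1 : ℤ) ^ (d + 1)) • c) = ((-1 : ℤ) ^ d) • (-c) := by
    rw [pow_succ, mul_smul]; simp
  rw [h1]
  constructor
  · exact IterLim_congr p (d + 1) fun v => DeltaFull_cons d f a v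
  · exact IterLim_congr p (d + 1) fun v => (DeltaFull_cons d f a v).symm

lemma hasC_zero_iff (p : Ultrafilter X) (f : X → Y) (c : Y) :
    HasC p 0 f c ↔ ∀ᶠ a in (p : Filter X), f a = c := by
  unfold HasC
  show (∀ᶠ a in (p : Filter X), IterLim p 0
      (fun v => DeltaFull 0 f (Fin.cons a v)) ((1 : ℤ) • c)) ↔ _
  refine eventually_congr (Eventually.of_forall fun a => ?_)
  show DeltaFull 0 f (Fin.cons a _) = (1 : ℤ) • c ↔ _
  simp [DeltaFull]

lemma deg_succ (p : Ultrafilter X) (hp : IsIdem p) :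
    ∀ (d : ℕ) (f : X → Y), APdegLE p d f → APdegLE p (d + 1) f := by
  intro d
  induction d with
  | zero =>
    intro f hf
    obtain ⟨k, hk⟩ := hf
    have h2 : ∀ᶠ a in (p : Filter X), ∀ᶠ x in (p : Filter X), f (x + a) = k :=
      idem_eventually p hp hk
    refine h2.mono fun a ha => ⟨k - k - f a, ?_⟩
    filter_upwards [ha, hk] with x hx1 hx2
    show f (x + a) - f x - f a = _
    rw [hx1, hx2]
  | succ d ih =>
    intro f hf
    exact hf.mono fun a ha => ih _ ha

lemma deg_le (p : Ultrafilter X) (hp : IsIdem p) {d e : ℕ} (hde : d ≤ e)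
    {f : X → Y} (hf : APdegLE p d f) : APdegLE p e f := by
  induction e, hde using Nat.le_induction with
  | base => exact hf
  | succ e _ ih => exact deg_succ p hp e f ih

lemma deg_add (p : Ultrafilter X) :
    ∀ (d : ℕ) (f f' : X → Y), APdegLE p d f → APdegLE p d f' →
      APdegLE p d (fun x => f x + f' x) := by
  intro d
  induction d with
  | zero =>
    rintro f f' ⟨k, hk⟩ ⟨k', hk'⟩
    exact ⟨k + k', by filter_upwards [hk, hk'] with x h1 h2; rw [h1, h2]⟩
  | succ d ih =>
    intro f f' hf hf'
    refine (hf.and hf').mono fun a ⟨ha, ha'⟩ => ?_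
    show APdegLE p d (Dbar a fun x => f x + f' x)
    rw [Dbar_add]
    exact ih _ _ ha ha'

lemma hasC_succ (p : Ultrafilter X) (hp : IsIdem p) :
    ∀ (d : ℕ) (f : X → Y) (c : Y), HasC p d f c → HasC p (d + 1) f c := by
  intro d
  induction d with
  | zero =>
    intro f c hc
    rw [hasC_zero_iff] at hc
    rw [hasC_succ_iff]
    have h2 : ∀ᶠ a in (p : Filter X), ∀ᶠ x in (p : Filter X), f (x + a) = c :=
      idem_eventually p hp hc
    filter_upwards [h2, hc] with a ha hfa
    rw [hasC_zero_iff]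
    filter_upwards [ha, hc] with x h1 h2
    show f (x + a) - f x - f a = -c
    rw [h1, h2, hfa]; abel
  | succ d ih =>
    intro f c hc
    rw [hasC_succ_iff] at hc
    rw [hasC_succ_iff]
    exact hc.mono fun a ha => ih _ _ ha

lemma hasC_le (p : Ultrafilter X) (hp : IsIdem p) {d e : ℕ} (hde : d ≤ e)
    {f : X → Y} {c : Y} (hc : HasC p d f c) : HasC p e f c := by
  induction e, hde using Nat.le_induction with
  | base => exact hc
  | succ e _ ih => exact hasC_succ p hp e f c ih

end AP

/-- sums of `p`-almost polynomials are `p`-almost polynomials, with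
`C(f + f') = C(f) + C(f')` and `deg (f + f') ≤ max (deg f) (deg f')`. -/
theorem stmt_6 {X : Type*} [AddCommSemigroup X] {Y : Type*} [AddCommGroup Y]
    (p : Ultrafilter X) (hp : AP.IsIdem p) (f f' : X → Y) (d d' : ℕ)
    (hf : AP.APdegLE p d f) (hf' : AP.APdegLE p d' f') :
    AP.APdegLE p (max d d') (fun x => f x + f' x) ∧
    ∀ c c' : Y, AP.HasC p d f c → AP.HasC p d' f' c' →
      AP.HasC p (max d d') (fun x => f x + f' x) (c + c') := by
  constructor
  · exact AP.deg_add p _ f f' (AP.deg_le p hp (le_max_left d d') hf)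
      (AP.deg_le p hp (le_max_right d d') hf')
  · intro c c' hc hc'
    exact AP.HasC_add (AP.hasC_le p hp (le_max_left d d') hc)
      (AP.hasC_le p hp (le_max_right d d') hc')
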